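/- arXiv:1005.1918 — 6 statements merged into one kernel-verified Lean document; each statement's English description precedes it below -/
import Mathlib

section
/- Let β₁ ≤ β₂ ≤ ... be reals with 1 ≤ β₁, and let B_T = Σ_{t=1}^T β_t. Then for any T ≥ 1, (1/β_T) Σ_{t=1}^T β_t √(β_t / B_t) ≤ 2 √(B_T / β_T). -/
/-! Writing `B₀ = 0`, each summand satisfies `β t / √(B t) = (B t - B (t-1)) / √(B t) ≤ 2 (√(B t) - √(B (t-1)))`,
so `∑ β t / √(B t)` telescopes to at most `2 √(B T)`. Monotonicity gives `β t √(β t / B t) ≤ √(β T) · β t / √(B t)`,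
and dividing by `β T` yields the bound. -/

open Finset Real

theorem sub_div_sqrt_le_two_mul_sqrt_sub {x y : ℝ} (hx : 0 ≤ x) (hxy : x ≤ y) :
    (y - x) / √y ≤ 2 * (√y - √x) := by
  rcases hxy.eq_or_lt with rfl | hlt
  · simp
  have hy : 0 < √y := sqrt_pos.mpr (hx.trans_lt hlt)
  rw [div_le_iff₀ hy]
  nlinarith [sq_sqrt hx, sq_sqrt (hx.trans hlt.le), sq_nonneg (√y - √x)]

theorem sum_div_sqrt_partialSum_le {f : ℕ → ℝ} (n : ℕ) (hf : ∀ t ∈ Icc 1 n, 0 ≤ f t) :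
    ∑ t ∈ Icc 1 n, f t / √(∑ s ∈ Icc 1 t, f s) ≤ 2 * √(∑ s ∈ Icc 1 n, f s) := by
  induction n with
  | zero => simp
  | succ n ih =>
    have hf' : ∀ t ∈ Icc 1 n, 0 ≤ f t := fun t ht => hf t (Icc_subset_Icc_right n.le_succ ht)
    have hfn : 0 ≤ f (n + 1) := hf _ (mem_Icc.mpr ⟨by omega, le_rfl⟩)
    have step := sub_div_sqrt_le_two_mul_sqrt_sub (sum_nonneg hf') (le_add_of_nonneg_right hfn)
    rw [add_sub_cancel_left] at step
    rw [sum_Icc_succ_top (by omega), sum_Icc_succ_top (by omega)]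
    linarith [ih hf']

theorem stmt_0 (β : ℕ → ℝ) (hmono : Monotone β) (hβ1 : 1 ≤ β 1)
    (B : ℕ → ℝ) (hB : ∀ t, B t = ∑ s ∈ Finset.Icc 1 t, β s)
    (T : ℕ) (hT : 1 ≤ T) :
    (1 / β T) * ∑ t ∈ Finset.Icc 1 T, β t * Real.sqrt (β t / B t)
      ≤ 2 * Real.sqrt (B T / β T) := by
  obtain rfl : B = fun t => ∑ s ∈ Icc 1 t, β s := funext hB
  have hβ : ∀ t ∈ Icc 1 T, 0 ≤ β t := fun t ht =>
    zero_le_one.trans (hβ1.trans (hmono (mem_Icc.mp ht).1))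
  have hβT : 0 ≤ β T := hβ T (mem_Icc.mpr ⟨hT, le_rfl⟩)
  have hterm : ∀ t ∈ Icc 1 T, β t * √(β t / ∑ s ∈ Icc 1 t, β s)
      ≤ √(β T) * (β t / √(∑ s ∈ Icc 1 t, β s)) := by
    intro t ht
    rw [sqrt_div (hβ t ht), mul_div_left_comm]
    have hβt := hβ t ht
    gcongr
    exact hmono (mem_Icc.mp ht).2
  calc (1 / β T) * ∑ t ∈ Icc 1 T, β t * √(β t / ∑ s ∈ Icc 1 t, β s)
      ≤ (1 / β T) * (√(β T) * (2 * √(∑ s ∈ Icc 1 T, β s))) := by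
        refine mul_le_mul_of_nonneg_left ?_ (by positivity)
        calc _ ≤ √(β T) * ∑ t ∈ Icc 1 T, β t / √(∑ s ∈ Icc 1 t, β s) := by
              rw [mul_sum]; exact sum_le_sum hterm
          _ ≤ _ := by gcongr; exact sum_div_sqrt_partialSum_le T hβ
    _ = 2 * √((∑ s ∈ Icc 1 T, β s) / β T) := by
        rw [sqrt_div (sum_nonneg hβ), div_eq_mul_one_div (√_), ← sqrt_div_self']
        ring
end

section
/- Hoeffding-type inequality for the square loss: for all p ∈ [0,1], q ∈ ℝ, and μ ∈ (0,2], p·exp(μ((1−p)² − (1−q)²)) + (1−p)·exp(μ(p² − q²)) ≤ 1. -/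
/-!
With `t = 2μ(q - p)` the left-hand side factors as `exp (-μ (q - p)²)` times the moment
generating function at `t` of the centred Bernoulli variable taking the value `1 - p` with
probability `p` and `-p` otherwise. Hoeffding's lemma bounds the latter by
`exp (t² / 8) = exp (μ² (q - p)² / 2)`, and `μ ≤ 2` makes the total exponent nonpositive.
-/

open Real MeasureTheory ProbabilityTheory

lemma mgf_centred_bernoulli_le (p t : ℝ) (hp0 : 0 ≤ p) (hp1 : p ≤ 1) :
    p * exp (t * (1 - p)) + (1 - p) * exp (-(t * p)) ≤ exp (t ^ 2 / 8) := by
  set ν := bernoulliMeasure (1 - p) (-p) ⟨p, hp0, hp1⟩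
  have hbounded : ∀ᵐ z ∂ν, id z ∈ Set.Icc (-p) (1 - p) :=
    ae_iff.2 <| bernoulliMeasure_apply_of_notMem_of_notMem _ measurableSet_Icc.compl
      (by simp) (by simp)
  have hcentred : ν[id] = 0 := by
    rw [integral_bernoulliMeasure]
    simp only [id, smul_eq_mul]
    ring
  have hsubgaussian :=
    hasSubgaussianMGF_of_mem_Icc_of_integral_eq_zero aemeasurable_id hbounded hcentred
  calc _ = mgf id ν t := by
        rw [mgf, integral_bernoulliMeasure]
        simp only [id, smul_eq_mul]
        ring_nf
    _ ≤ _ := hsubgaussian.mgf_le t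
    _ = exp (t ^ 2 / 8) := by
        norm_num
        ring_nf

theorem stmt_7 (p q μ : ℝ) (hp0 : 0 ≤ p) (hp1 : p ≤ 1) (hμ0 : 0 < μ) (hμ2 : μ ≤ 2) :
    p * Real.exp (μ * ((1 - p) ^ 2 - (1 - q) ^ 2))
      + (1 - p) * Real.exp (μ * (p ^ 2 - q ^ 2)) ≤ 1 := by
  set t := 2 * μ * (q - p) with ht
  calc _ = exp (-(μ * (q - p) ^ 2)) * (p * exp (t * (1 - p)) + (1 - p) * exp (-(t * p))) := by
        rw [mul_add, mul_left_comm, ← exp_add, mul_left_comm _ (1 - p), ← exp_add]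
        congr 3 <;> ring
    _ ≤ exp (-(μ * (q - p) ^ 2)) * exp (t ^ 2 / 8) := by
        gcongr
        exact mgf_centred_bernoulli_le p t hp0 hp1
    _ = exp (μ * (q - p) ^ 2 * (μ / 2 - 1)) := by
        rw [← exp_add, ht]
        ring_nf
    _ ≤ 1 := exp_le_one_iff.2 <| mul_nonpos_of_nonneg_of_nonpos (by positivity) (by linarith)
end

section
/- Hoeffding's lemma for a Bernoulli variable: for all p ∈ [0,1] and h ∈ ℝ, p·e^{h(1−p)} + (1−p)·e^{−hp} ≤ e^{h²/8}. -/
/-!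
The left-hand side is the moment generating function at `h` of the centred Bernoulli variable,
which has mean zero and takes values in `[-p, 1 - p]`, an interval of length one; Hoeffding's lemma
bounds it by `exp (h ^ 2 / 8)`.
-/

open MeasureTheory Real

namespace ProbabilityTheory

noncomputable def twoPointMeasure (p x y : ℝ) : Measure ℝ :=
  ENNReal.ofReal p • .dirac x + ENNReal.ofReal (1 - p) • .dirac y

variable {p x y : ℝ}

lemma isProbabilityMeasure_twoPointMeasure (hp0 : 0 ≤ p) (hp1 : p ≤ 1) :
    IsProbabilityMeasure (twoPointMeasure p x y) := by
  constructor
  simp [twoPointMeasure, ← ENNReal.ofReal_add hp0 (sub_nonneg.2 hp1)]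

lemma integral_twoPointMeasure (hp0 : 0 ≤ p) (hp1 : p ≤ 1) (f : ℝ → ℝ) :
    ∫ z, f z ∂twoPointMeasure p x y = p * f x + (1 - p) * f y := by
  have hf (z : ℝ) (c : ℝ) : Integrable f (ENNReal.ofReal c • .dirac z) :=
    (integrable_dirac enorm_lt_top).smul_measure ENNReal.ofReal_ne_top
  rw [twoPointMeasure, integral_add_measure (hf x p) (hf y (1 - p)), integral_smul_measure,
    integral_smul_measure, integral_dirac, integral_dirac, ENNReal.toReal_ofReal hp0,
    ENNReal.toReal_ofReal (sub_nonneg.2 hp1), smul_eq_mul, smul_eq_mul]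

lemma ae_mem_Icc_min_max_twoPointMeasure :
    ∀ᵐ z ∂twoPointMeasure p x y, z ∈ Set.Icc (min x y) (max x y) := by
  rw [twoPointMeasure, ae_add_measure_iff]
  exact ⟨Measure.ae_smul_measure
      ((ae_dirac_iff measurableSet_Icc).2 ⟨min_le_left .., le_max_left ..⟩) _,
    Measure.ae_smul_measure
      ((ae_dirac_iff measurableSet_Icc).2 ⟨min_le_right .., le_max_right ..⟩) _⟩

theorem mul_exp_add_mul_exp_le_of_mean_eq_zero (hp0 : 0 ≤ p) (hp1 : p ≤ 1)
    (hmean : p * x + (1 - p) * y = 0) (t : ℝ) :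
    p * exp (t * x) + (1 - p) * exp (t * y) ≤ exp ((x - y) ^ 2 * t ^ 2 / 8) := by
  have := isProbabilityMeasure_twoPointMeasure (x := x) (y := y) hp0 hp1
  have hsubgaussian := hasSubgaussianMGF_of_mem_Icc_of_integral_eq_zero (X := id) aemeasurable_id
    ae_mem_Icc_min_max_twoPointMeasure
    (by rw [integral_twoPointMeasure hp0 hp1]; exact hmean)
  convert hsubgaussian.mgf_le t using 1
  · rw [mgf, integral_twoPointMeasure hp0 hp1]; rfl
  · congr 1
    push_cast
    rw [max_sub_min_eq_abs, Real.norm_eq_abs, abs_abs, div_pow, sq_abs, sub_sq_comm]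
    ring

end ProbabilityTheory

open ProbabilityTheory in
theorem stmt_8 (p h : ℝ) (hp0 : 0 ≤ p) (hp1 : p ≤ 1) :
    p * Real.exp (h * (1 - p)) + (1 - p) * Real.exp (-h * p)
      ≤ Real.exp (h ^ 2 / 8) := by
  have hmean : p * (1 - p) + (1 - p) * -p = 0 := by ring
  convert mul_exp_add_mul_exp_le_of_mean_eq_zero hp0 hp1 hmean h using 4 <;> ring
end

section
/- Defensive property for the square loss: for any η with 0 < η ≤ 2/(Y₂−Y₁)², any p ∈ [0,1], any expert prediction ξ ∈ ℝ, and the forecast γ = p(Y₂−Y₁)+Y₁, it holds that p·exp(η((γ−Y₂)² − (ξ−Y₂)²)) + (1−p)·exp(η((γ−Y₁)² − (ξ−Y₁)²)) ≤ 1. -/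
/-!
With `d = Y₂ - Y₁`, `u = ξ - γ` and `t = 2ηud`, the two exponents are `-ηu² + t(1 - p)` and
`-ηu² - tp`, so the left-hand side is `exp(-ηu²)` times the moment generating function at `t` of
a centred Bernoulli(`p`) variable. Hoeffding's lemma bounds the latter by `exp(t²/8)`, and
`t²/8 = ηu² · ηd²/2 ≤ ηu²` because `ηd² ≤ 2`.
-/

open Real ProbabilityTheory MeasureTheory unitInterval

theorem bernoulli_centered_mgf_le {p : ℝ} (hp0 : 0 ≤ p) (hp1 : p ≤ 1) (t : ℝ) :
    p * exp (t * (1 - p)) + (1 - p) * exp (-(t * p)) ≤ exp (t ^ 2 / 8) := by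
  set μ : Measure ℝ := Ber((1 : ℝ), 0, ⟨p, hp0, hp1⟩)
  have hμ : ∀ᵐ x ∂μ, id x ∈ Set.Icc (0 : ℝ) 1 :=
    ae_iff.2 <| bernoulliMeasure_apply_of_notMem_of_notMem _ measurableSet_Icc.compl
      (by simp) (by simp)
  calc _ = mgf (fun x ↦ id x - μ[id]) μ t := by simp [mgf, μ, integral_bernoulliMeasure]
    _ ≤ exp ((‖(1 : ℝ) - 0‖₊ / 2) ^ 2 * t ^ 2 / 2) :=
      (hasSubgaussianMGF_of_mem_Icc aemeasurable_id hμ).mgf_le t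
    _ = exp (t ^ 2 / 8) := by norm_num; ring_nf

theorem stmt_9_general (Y₁ Y₂ η p ξ : ℝ)
    (hη0 : 0 < η) (hη : η ≤ 2 / (Y₂ - Y₁) ^ 2)
    (hp0 : 0 ≤ p) (hp1 : p ≤ 1) :
    p * Real.exp (η * ((p * (Y₂ - Y₁) + Y₁ - Y₂) ^ 2 - (ξ - Y₂) ^ 2))
      + (1 - p) * Real.exp (η * ((p * (Y₂ - Y₁) + Y₁ - Y₁) ^ 2 - (ξ - Y₁) ^ 2)) ≤ 1 := by
  set d := Y₂ - Y₁
  set u := ξ - (p * d + Y₁)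
  set t := 2 * η * u * d
  have hηd : η * d ^ 2 ≤ 2 := by
    rcases eq_or_ne d 0 with hd | hd
    · simp [hd]
    · rwa [le_div_iff₀ (by positivity)] at hη
  have hsq : η * u ^ 2 * (η * d ^ 2) ≤ η * u ^ 2 * 2 :=
    mul_le_mul_of_nonneg_left hηd (by positivity)
  have hloss₂ : η * ((p * d + Y₁ - Y₂) ^ 2 - (ξ - Y₂) ^ 2) = -(η * u ^ 2) + t * (1 - p) := by
    simp only [u, t, d]; ring
  have hloss₁ : η * ((p * d + Y₁ - Y₁) ^ 2 - (ξ - Y₁) ^ 2) = -(η * u ^ 2) + -(t * p) := by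
    simp only [u, t, d]; ring
  calc _ = exp (-(η * u ^ 2)) * (p * exp (t * (1 - p)) + (1 - p) * exp (-(t * p))) := by
        rw [hloss₂, hloss₁, exp_add, exp_add]; ring
    _ ≤ exp (-(η * u ^ 2)) * exp (t ^ 2 / 8) := by gcongr; exact bernoulli_centered_mgf_le hp0 hp1 t
    _ ≤ 1 := by
      rw [← exp_add, exp_le_one_iff]
      linear_combination hsq / 2

theorem stmt_9 (Y₁ Y₂ η p ξ : ℝ) (hY : Y₁ < Y₂)
    (hη0 : 0 < η) (hη : η ≤ 2 / (Y₂ - Y₁) ^ 2)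
    (hp0 : 0 ≤ p) (hp1 : p ≤ 1) :
    p * Real.exp (η * ((p * (Y₂ - Y₁) + Y₁ - Y₂) ^ 2 - (ξ - Y₂) ^ 2))
      + (1 - p) * Real.exp (η * ((p * (Y₂ - Y₁) + Y₁ - Y₁) ^ 2 - (ξ - Y₁) ^ 2)) ≤ 1 :=
  stmt_9_general Y₁ Y₂ η p ξ hη0 hη hp0 hp1
end

section
/- Convexity interpolation for square loss differences: for any ζ₁, ζ₂ ∈ ℝ, any Y₁ ≤ y ≤ Y₂ with y = u·Y₂ + (1−u)·Y₁ for u ∈ [0,1], and any η ≥ 0, exp(η((ζ₁−y)² − (ζ₂−y)²)) ≤ u·exp(η((ζ₁−Y₂)² − (ζ₂−Y₂)²)) + (1−u)·exp(η((ζ₁−Y₁)² − (ζ₂−Y₁)²)). -/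
/-! The `y ^ 2` terms cancel in `(a - y) ^ 2 - (b - y) ^ 2`, so the exponent is affine in `y`
and the inequality is convexity of `exp` along the segment `[Y₁, Y₂]`. -/

open Real Set

theorem sq_sub_sub_sq_sub_convexComb (a b p q s t : ℝ) (hst : s + t = 1) :
    (a - (s * p + t * q)) ^ 2 - (b - (s * p + t * q)) ^ 2
      = s * ((a - p) ^ 2 - (b - p) ^ 2) + t * ((a - q) ^ 2 - (b - q) ^ 2) := by
  obtain rfl : t = 1 - s := by linarith
  ring

theorem convexOn_exp_mul_sq_sub_sub_sq_sub (η a b : ℝ) :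
    ConvexOn ℝ univ fun y => exp (η * ((a - y) ^ 2 - (b - y) ^ 2)) := by
  refine ⟨convex_univ, fun p _ q _ s t hs ht hst => ?_⟩
  simp only [smul_eq_mul]
  rw [sq_sub_sub_sq_sub_convexComb a b p q s t hst, mul_add, mul_left_comm η s,
    mul_left_comm η t]
  exact convexOn_exp.2 (mem_univ _) (mem_univ _) hs ht hst

theorem stmt_10_general (ζ₁ ζ₂ Y₁ Y₂ η u y : ℝ)
    (hu0 : 0 ≤ u) (hu1 : u ≤ 1) (hy : y = u * Y₂ + (1 - u) * Y₁) :
    Real.exp (η * ((ζ₁ - y) ^ 2 - (ζ₂ - y) ^ 2))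
      ≤ u * Real.exp (η * ((ζ₁ - Y₂) ^ 2 - (ζ₂ - Y₂) ^ 2))
        + (1 - u) * Real.exp (η * ((ζ₁ - Y₁) ^ 2 - (ζ₂ - Y₁) ^ 2)) := by
  subst hy
  exact (convexOn_exp_mul_sq_sub_sub_sq_sub η ζ₁ ζ₂).2 (mem_univ Y₂) (mem_univ Y₁)
    hu0 (sub_nonneg.2 hu1) (add_sub_cancel u 1)

theorem stmt_10 (ζ₁ ζ₂ Y₁ Y₂ η u y : ℝ) (hη : 0 ≤ η)
    (hu0 : 0 ≤ u) (hu1 : u ≤ 1) (hy : y = u * Y₂ + (1 - u) * Y₁) :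
    Real.exp (η * ((ζ₁ - y) ^ 2 - (ζ₂ - y) ^ 2))
      ≤ u * Real.exp (η * ((ζ₁ - Y₂) ^ 2 - (ζ₂ - Y₂) ^ 2))
        + (1 - u) * Real.exp (η * ((ζ₁ - Y₁) ^ 2 - (ζ₂ - Y₁) ^ 2)) :=
  stmt_10_general ζ₁ ζ₂ Y₁ Y₂ η u y hu0 hu1 hy
end

section
/- Determinant–trace bound: if K is a symmetric positive semidefinite T×T real matrix with diagonal entries K_{tt} ≤ c², W = diag(β₁/β_T,...,β_T/β_T) with 0 < β₁ ≤ ... ≤ β_T, and a > 0, then ln det(I + (1/a)√W·K·√W) ≤ (c²/a)·(Σ_{t=1}^T β_t)/β_T. -/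
/-! Write `B = (1/a) √W K √W`, which is positive semidefinite. Each eigenvalue `μ` of `1 + B`
satisfies `log μ ≤ μ - 1`, so `log det (1 + B) ≤ tr B = (1/a) ∑ₜ (βₜ/β_T) Kₜₜ`, and `Kₜₜ ≤ c²`
bounds the last sum. -/

open Matrix

theorem Matrix.PosSemidef.log_det_one_add_le_trace {n : Type*} [Fintype n] [DecidableEq n]
    {B : Matrix n n ℝ} (hB : B.PosSemidef) : Real.log (1 + B).det ≤ B.trace := by
  have hM : (1 + B).PosDef := PosDef.one.add_posSemidef hB
  set μ := hM.isHermitian.eigenvalues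
  have hμ : ∀ i, 0 < μ i := hM.eigenvalues_pos
  have hdet : (1 + B).det = ∏ i, μ i := by simpa using hM.isHermitian.det_eq_prod_eigenvalues
  have htr : (1 + B).trace = ∑ i, μ i := by simpa using hM.isHermitian.trace_eq_sum_eigenvalues
  calc Real.log (1 + B).det = ∑ i, Real.log (μ i) := by
        rw [hdet, Real.log_prod fun i _ => (hμ i).ne']
    _ ≤ ∑ i, (μ i - 1) := Finset.sum_le_sum fun i _ => Real.log_le_sub_one_of_pos (hμ i)
    _ = B.trace := by
        rw [Finset.sum_sub_distrib, ← htr, trace_add, trace_one]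
        simp

theorem Matrix.PosSemidef.diagonal_mul_mul_diagonal {n : Type*} [Fintype n] [DecidableEq n]
    {K : Matrix n n ℝ} (hK : K.PosSemidef) (d : n → ℝ) :
    (diagonal d * K * diagonal d).PosSemidef := by
  simpa using hK.mul_mul_conjTranspose_same (diagonal d)

theorem Matrix.trace_diagonal_mul_mul_diagonal {n R : Type*} [Fintype n] [DecidableEq n]
    [CommSemiring R] (d e : n → R) (A : Matrix n n R) :
    (diagonal d * A * diagonal e).trace = ∑ i, d i * A i i * e i := by
  simp [trace, mul_diagonal, diagonal_mul]

theorem Fin.sum_univ_eq_sum_Icc_one {M : Type*} [AddCommMonoid M] (f : ℕ → M) (n : ℕ) :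
    ∑ i : Fin n, f (i + 1) = ∑ t ∈ Finset.Icc 1 n, f t := by
  rw [Fin.sum_univ_eq_sum_range (fun i => f (i + 1)), ← Finset.Ico_add_one_right_eq_Icc,
    Finset.sum_Ico_eq_sum_range]
  simp [add_comm]

theorem stmt_18_general (T : ℕ) (K : Matrix (Fin T) (Fin T) ℝ)
    (hK : K.PosSemidef) (c a : ℝ) (ha : 0 < a)
    (hdiag : ∀ t, K t t ≤ c ^ 2)
    (β : ℕ → ℝ) (hβpos : ∀ t, 0 < β t) :
    Real.log (Matrix.det
        ((1 : Matrix (Fin T) (Fin T) ℝ) + (1 / a) •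
          (Matrix.diagonal (fun i : Fin T => Real.sqrt (β (i.val + 1) / β T)) * K *
            Matrix.diagonal (fun i : Fin T => Real.sqrt (β (i.val + 1) / β T)))))
      ≤ (c ^ 2 / a) * (∑ t ∈ Finset.Icc 1 T, β t) / β T := by
  set w : Fin T → ℝ := fun i => β (i.val + 1) / β T
  have hw : ∀ i, 0 ≤ w i := fun i => div_nonneg (hβpos _).le (hβpos _).le
  have hB : ((1 / a) • (diagonal (fun i => √(w i)) * K * diagonal (fun i => √(w i)))).PosSemidef :=
    (hK.diagonal_mul_mul_diagonal _).smul (by positivity)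
  refine hB.log_det_one_add_le_trace.trans ?_
  calc ((1 / a) • (diagonal (fun i => √(w i)) * K * diagonal (fun i => √(w i)))).trace
      = 1 / a * ∑ i, w i * K i i := by
        rw [trace_smul, trace_diagonal_mul_mul_diagonal, smul_eq_mul]
        congr 1
        refine Finset.sum_congr rfl fun i _ => ?_
        rw [mul_right_comm, Real.mul_self_sqrt (hw i)]
    _ ≤ 1 / a * ∑ i, w i * c ^ 2 := by
        gcongr with i
        exacts [hw i, hdiag i]
    _ = (c ^ 2 / a) * (∑ t ∈ Finset.Icc 1 T, β t) / β T := by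
        rw [← Finset.sum_mul, ← Finset.sum_div, Fin.sum_univ_eq_sum_Icc_one (β ·) T]
        field_simp

theorem stmt_18 (T : ℕ) (hT : 1 ≤ T) (K : Matrix (Fin T) (Fin T) ℝ)
    (hK : K.PosSemidef) (c a : ℝ) (ha : 0 < a)
    (hdiag : ∀ t, K t t ≤ c ^ 2)
    (β : ℕ → ℝ) (hβpos : ∀ t, 0 < β t) (hβmono : Monotone β) :
    Real.log (Matrix.det
        ((1 : Matrix (Fin T) (Fin T) ℝ) + (1 / a) •
          (Matrix.diagonal (fun i : Fin T => Real.sqrt (β (i.val + 1) / β T)) * K *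
            Matrix.diagonal (fun i : Fin T => Real.sqrt (β (i.val + 1) / β T)))))
      ≤ (c ^ 2 / a) * (∑ t ∈ Finset.Icc 1 T, β t) / β T :=
  stmt_18_general T K hK c a ha hdiag β hβpos
end
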